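/- arXiv:math/0305425 — 4 statements merged into one kernel-verified Lean document; each statement's English description precedes it below -/
import Mathlib

section
/- If G fits in a short exact sequence 1 → K → G → Q → 1 with Q finite, then G embeds into the wreath product K ≀ Q. -/
/-- The regular (left-translation) action of `Q` on `Q → K`, used to form the
wreath product `K ≀ Q = (Q → K) ⋊ Q`. -/
def regularWreathAction (Q K : Type*) [Group Q] [Group K] : Q →* MulAut (Q → K) where
  toFun q :=
    { toFun := fun f x => f (q⁻¹ * x)
      invFun := fun f x => f (q * x)
      left_inv := by intro f; funext x; simp [← mul_assoc]
      right_inv := by intro f; funext x; simp [← mul_assoc]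
      map_mul' := fun f g => rfl }
  map_one' := by ext f x; simp
  map_mul' := by intro a b; ext f x; simp [mul_assoc]

/-- If `1 → K → G → Q → 1` is exact with `Q` finite, then `G` embeds into the wreath
product `K ≀ Q = (Q → K) ⋊ Q`. -/
theorem embeds_in_wreath_product
    {K G Q : Type*} [Group K] [Group G] [Group Q] [Finite Q]
    (i : K →* G) (hi : Function.Injective i)
    (p : G →* Q) (hp : Function.Surjective p)
    (hexact : p.ker = i.range) :
    ∃ e : G →* (Q → K) ⋊[regularWreathAction Q K] Q, Function.Injective e := by
  classical
  set s : Q → G := Function.surjInv hp with hs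
  have hps : ∀ q, p (s q) = q := fun q => Function.surjInv_eq hp q
  have hmem : ∀ (g : G) (q : Q), (s q)⁻¹ * g * s ((p g)⁻¹ * q) ∈ i.range := by
    intro g q
    rw [← hexact, MonoidHom.mem_ker]
    simp only [map_mul, map_inv, hps]; group
  let φ : i.range ≃* K := (MonoidHom.ofInjective hi).symm
  have hiφ : ∀ x : i.range, i (φ x) = x := by
    intro x
    exact congrArg Subtype.val ((MonoidHom.ofInjective hi).apply_symm_apply x)
  let f : G → Q → K := fun g q => φ ⟨_, hmem g q⟩
  have hif : ∀ g q, i (f g q) = (s q)⁻¹ * g * s ((p g)⁻¹ * q) := fun g q => hiφ _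
  refine ⟨{ toFun := fun g => ⟨f g, p g⟩, map_one' := ?_, map_mul' := ?_ }, ?_⟩
  · have h1 : f 1 = 1 := by
      funext q
      apply hi
      rw [hif]
      simp
    simp only [h1, map_one]
    rfl
  · intro g h
    have hcomp : f (g * h) = f g * (regularWreathAction Q K (p g)) (f h) := by
      funext q
      apply hi
      have : (regularWreathAction Q K (p g)) (f h) q = f h ((p g)⁻¹ * q) := rfl
      rw [Pi.mul_apply, map_mul, this, hif, hif, hif]
      simp [mul_assoc, mul_inv_rev]
    show (⟨f (g * h), p (g * h)⟩ : (Q → K) ⋊[regularWreathAction Q K] Q)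
        = ⟨f g * (regularWreathAction Q K (p g)) (f h), p g * p h⟩
    rw [hcomp, map_mul]
  · rw [injective_iff_map_eq_one]
    intro g hg
    have h1 : f g = 1 := congrArg SemidirectProduct.left hg
    have h2 : p g = 1 := congrArg SemidirectProduct.right hg
    have := hif g 1
    rw [congrFun h1 1, Pi.one_apply, map_one, h2] at this
    simp only [inv_one, one_mul] at this
    have h3 : g = s 1 * ((s 1)⁻¹ * g * s 1) * (s 1)⁻¹ := by group
    rw [← this] at h3
    simpa using h3
end

section
/- Let p : Γ → G be a group homomorphism with finite kernel, and let S be a virtually cyclic subgroup of G. Then p⁻¹(S) is virtually cyclic. -/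
/-!
Take a cyclic subgroup `⟨c⟩` of finite index in `S`; its preimage has finite index in `p⁻¹(S)`.
The image of that preimage is a subgroup of `⟨c⟩`, hence generated by some `p t`, and then every
coset of `⟨t⟩` in `p⁻¹⟨c⟩` meets the finite kernel, so `⟨t⟩` has finite index as well.
-/

/-- A group is *virtually cyclic* if it contains a cyclic subgroup of finite index. -/
def IsVirtuallyCyclic (G : Type*) [Group G] : Prop :=
  ∃ H : Subgroup G, IsCyclic H ∧ H.FiniteIndex

namespace Subgroup

variable {Γ G : Type*} [Group Γ] [Group G]

theorem finite_ker_subgroupComap {f : Γ →* G} [Finite f.ker] (H : Subgroup G) :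
    Finite (f.subgroupComap H).ker :=
  Finite.of_injective (fun k => (⟨((k : H.comap f) : Γ), congrArg Subtype.val k.2⟩ : f.ker))
    fun _ _ h => Subtype.ext <| Subtype.ext (congrArg Subtype.val h :)

theorem finiteIndex_of_map_eq_range {f : Γ →* G} [Finite f.ker] {H : Subgroup Γ}
    (hH : H.map f = f.range) : H.FiniteIndex := by
  suffices Function.Surjective fun k : f.ker => (k : Γ ⧸ H) by
    have := Finite.of_surjective _ this
    exact finiteIndex_of_finite_quotient
  intro q
  induction q using QuotientGroup.induction_on with
  | H x =>
    obtain ⟨h, hh, hfh⟩ : f x ∈ H.map f := hH ▸ ⟨x, rfl⟩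
    refine ⟨⟨x * h⁻¹, by simp [hfh]⟩, QuotientGroup.eq.mpr ?_⟩
    simpa using hh

end Subgroup

namespace IsVirtuallyCyclic

variable {Γ G : Type*} [Group Γ] [Group G]

theorem of_finiteIndex {K : Subgroup Γ} [K.FiniteIndex] (hK : IsVirtuallyCyclic K) :
    IsVirtuallyCyclic Γ := by
  obtain ⟨H, hH, hHK⟩ := hK
  refine ⟨H.map K.subtype, ?_, ⟨?_⟩⟩
  · exact isCyclic_of_surjective _ (H.equivMapOfInjective _ K.subtype_injective).surjective
  · rw [Subgroup.index_map_subtype]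
    exact mul_ne_zero hHK.index_ne_zero Subgroup.FiniteIndex.index_ne_zero

theorem of_isCyclic_of_finite_ker [IsCyclic G] (f : Γ →* G) [Finite f.ker] :
    IsVirtuallyCyclic Γ := by
  obtain ⟨c, hc⟩ := f.range.isCyclic_iff_exists_zpowers_eq_top.mp inferInstance
  obtain ⟨t, rfl⟩ : c ∈ f.range := by rw [← hc]; exact Subgroup.mem_zpowers c
  exact ⟨Subgroup.zpowers t, inferInstance,
    Subgroup.finiteIndex_of_map_eq_range (f := f) (by rw [MonoidHom.map_zpowers, hc])⟩

theorem of_finite_ker (hG : IsVirtuallyCyclic G) (f : Γ →* G) [Finite f.ker] :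
    IsVirtuallyCyclic Γ := by
  obtain ⟨H, hH, hHG⟩ := hG
  have : (H.comap f).FiniteIndex :=
    ⟨H.index_comap f ▸ (H.isFiniteRelIndex_of_finiteIndex (K := f.range)).relIndex_ne_zero⟩
  have := Subgroup.finite_ker_subgroupComap (f := f) H
  exact of_finiteIndex (of_isCyclic_of_finite_ker (f.subgroupComap H))

end IsVirtuallyCyclic

theorem preimage_virtuallyCyclic_of_finite_kernel_general
    {Γ G : Type*} [Group Γ] [Group G] (p : Γ →* G)
    (hker : Finite p.ker)
    (S : Subgroup G) (hS : IsVirtuallyCyclic S) :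
    IsVirtuallyCyclic (S.comap p) :=
  have := Subgroup.finite_ker_subgroupComap (f := p) S
  hS.of_finite_ker (p.subgroupComap S)

/-- If `p : Γ → G` is a surjective homomorphism with finite kernel and `S ≤ G` is
virtually cyclic, then `p⁻¹(S)` is virtually cyclic. -/
theorem preimage_virtuallyCyclic_of_finite_kernel
    {Γ G : Type*} [Group Γ] [Group G] (p : Γ →* G)
    (hp : Function.Surjective p) (hker : Finite p.ker)
    (S : Subgroup G) (hS : IsVirtuallyCyclic S) :
    IsVirtuallyCyclic (S.comap p) :=
  preimage_virtuallyCyclic_of_finite_kernel_general p hker S hS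
end

section
/- Every infinite virtually cyclic group G surjects onto either ℤ or the infinite dihedral group D∞ with finite kernel. -/
open Subgroup Multiplicative DihedralGroup

section

variable {G : Type*} [Group G]

theorem Subgroup.infinite_of_finiteIndex [Infinite G] (H : Subgroup G) [H.FiniteIndex] :
    Infinite H := by
  rw [← not_finite_iff_infinite]
  intro hH
  have := H.finite_iff_finite_and_finiteIndex.mpr ⟨hH, ‹_›⟩
  exact not_finite G

theorem Subgroup.finite_of_disjoint {K N : Subgroup G} [N.FiniteIndex] (h : Disjoint K N) :
    Finite K := by
  have : Finite (N.subgroupOf K) := by rw [subgroupOf_eq_bot.mpr h.symm]; infer_instance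
  exact (N.subgroupOf K).finite_iff_finite_and_finiteIndex.mpr ⟨this, inferInstance⟩

theorem Subgroup.finite_of_forall_isOfFinOrder {K : Subgroup G} (hK : ∀ g ∈ K, IsOfFinOrder g)
    {z : G} (hz : ¬IsOfFinOrder z) [(zpowers z).FiniteIndex] : Finite K := by
  refine finite_of_disjoint (N := zpowers z) (disjoint_def.mpr fun {x} hxK hxz => ?_)
  obtain ⟨j, rfl⟩ := mem_zpowers_iff.mp hxz
  obtain ⟨i, hi, hji⟩ := isOfFinOrder_iff_zpow_eq_one.mp (hK _ hxK)
  rw [← zpow_mul, ← zpow_zero z] at hji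
  rcases mul_eq_zero.mp (injective_zpow_iff_not_isOfFinOrder.mpr hz hji) with rfl | rfl
  · exact zpow_zero z
  · exact absurd rfl hi

theorem IsVirtuallyCyclic.exists_zpowers_normal_finiteIndex [Infinite G]
    (h : IsVirtuallyCyclic G) :
    ∃ z : G, ¬IsOfFinOrder z ∧ (zpowers z).Normal ∧ (zpowers z).FiniteIndex := by
  obtain ⟨H, hH, hfin⟩ := h
  have : IsCyclic H.normalCore :=
    isCyclic_of_surjective _ (subgroupOfEquivOfLe H.normalCore_le).surjective
  obtain ⟨z, hz⟩ := H.normalCore.isCyclic_iff_exists_zpowers_eq_top.mp this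
  have := H.normalCore.infinite_of_finiteIndex
  refine ⟨z, ?_, hz ▸ inferInstance, hz ▸ inferInstance⟩
  rw [← infinite_zpowers, hz]
  exact Set.infinite_coe_iff.mp this

theorem inv_ne_self_of_not_isOfFinOrder {z : G} (hz : ¬IsOfFinOrder z) : z⁻¹ ≠ z :=
  fun h => hz <| isOfFinOrder_iff_pow_eq_one.mpr
    ⟨2, two_pos, by rw [sq]; nth_rewrite 1 [← h]; exact inv_mul_cancel z⟩

theorem conj_eq_or_eq_inv_of_zpowers_normal {z : G} (hz : ¬IsOfFinOrder z)
    [hN : (zpowers z).Normal] (g : G) : g * z * g⁻¹ = z ∨ g * z * g⁻¹ = z⁻¹ := by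
  obtain ⟨m, hm⟩ := mem_zpowers_iff.mp (hN.conj_mem z (mem_zpowers z) g)
  obtain ⟨k, hk⟩ := mem_zpowers_iff.mp (hN.conj_mem z (mem_zpowers z) g⁻¹)
  have hmk : z ^ (m * k) = z ^ (1 : ℤ) := by
    rw [zpow_mul, hm, conj_zpow, hk, zpow_one]
    group
  rcases Int.eq_one_or_neg_one_of_mul_eq_one
      (injective_zpow_iff_not_isOfFinOrder.mpr hz hmk) with rfl | rfl
  · exact .inl (by rw [← hm, zpow_one])
  · exact .inr (by rw [← hm, zpow_neg_one])

theorem mem_centralizer_singleton_iff_conj {z g : G} :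
    g ∈ centralizer {z} ↔ g * z * g⁻¹ = z := by
  rw [mem_centralizer_singleton_iff, mul_inv_eq_iff_eq_mul, eq_comm]

theorem index_centralizer_eq_two {z : G} (hz : ¬IsOfFinOrder z) [(zpowers z).Normal] {s : G}
    (hs : s * z * s⁻¹ = z⁻¹) : (centralizer {z}).index = 2 := by
  have hz' := inv_ne_self_of_not_isOfFinOrder hz
  refine index_eq_two_iff'.mpr ⟨s, fun b => ?_⟩
  rw [mem_centralizer_singleton_iff_conj, mem_centralizer_singleton_iff_conj,
    show s * b * z * (s * b)⁻¹ = s * (b * z * b⁻¹) * s⁻¹ by group]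
  rcases conj_eq_or_eq_inv_of_zpowers_normal hz b with h | h <;> rw [h]
  · simp [hs, hz']
  · rw [show s * z⁻¹ * s⁻¹ = (s * z * s⁻¹)⁻¹ by group, hs, inv_inv]
    simp [hz']

theorem exists_hom_pow_index_eq_zpow_of_mem_center {z : G} (hcen : z ∈ center G)
    (hz : ¬IsOfFinOrder z) [(zpowers z).FiniteIndex] :
    ∃ V : G →* Multiplicative ℤ, ∀ g, g ^ (zpowers z).index = z ^ (V g).toAdd := by
  have hinj : Function.Injective (zpowersHom G z) := injective_zpow_iff_not_isOfFinOrder.mpr hz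
  let ϕ : zpowers z ≃* Multiplicative ℤ := (MonoidHom.ofInjective hinj).symm
  have central (k : ℕ) (g g₀ : G) (hk : g₀⁻¹ * g ^ k * g₀ ∈ zpowers z) :
      g₀⁻¹ * g ^ k * g₀ = g ^ k := by
    have := mem_center_iff.mp (zpowers_le.mpr hcen hk) g₀
    exact (mul_right_cancel
      (by simpa only [← mul_assoc, mul_inv_cancel, one_mul] using this)).symm
  refine ⟨MonoidHom.transfer ϕ.toMonoidHom, fun g => ?_⟩
  rw [MonoidHom.transfer_eq_pow _ g (central · g)]
  have := congrArg Subtype.val <| (MonoidHom.ofInjective hinj).apply_symm_apply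
    ⟨g ^ (zpowers z).index, MonoidHom.transfer_eq_pow_aux g (central · g)⟩
  rw [MonoidHom.ofInjective_apply] at this
  exact this.symm

theorem MonoidHom.exists_surjective_int_mul_eq {P : Type*} [Group P] (V : P →* Multiplicative ℤ)
    (hV : V ≠ 1) : ∃ ψ : P →* Multiplicative ℤ, Function.Surjective ψ ∧
      ∃ k : ℤ, k ≠ 0 ∧ ∀ g, (V g).toAdd = k * (ψ g).toAdd := by
  obtain ⟨g, hg⟩ := DFunLike.ne_iff.mp hV
  have : Infinite V.range := Set.infinite_coe_iff.mpr <|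
    (infinite_zpowers.mpr (not_isOfFinOrder_of_isMulTorsionFree hg)).mono
      (zpowers_le.mpr ⟨g, rfl⟩)
  let e : Multiplicative ℤ ≃* V.range := intCyclicMulEquiv
  refine ⟨e.symm.toMonoidHom.comp V.rangeRestrict,
    e.symm.surjective.comp V.rangeRestrict_surjective,
    (e (ofAdd 1) : Multiplicative ℤ).toAdd, fun h => ?_, fun x => ?_⟩
  · have : e (ofAdd 1) = 1 := Subtype.ext (toAdd.injective (h.trans toAdd_one.symm))
    exact absurd (e.map_eq_one_iff.mp this) (by decide)
  · set y := e.symm (V.rangeRestrict x)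
    have hy : y = ofAdd 1 ^ y.toAdd := by simp [← ofAdd_zsmul]
    have : V x = (e y : Multiplicative ℤ) := by simp [y]
    rw [this, hy, map_zpow, coe_zpow, toAdd_zpow, smul_eq_mul, mul_comm]
    rfl

theorem exists_surjective_int_of_mem_center {z : G} (hcen : z ∈ center G)
    (hz : ¬IsOfFinOrder z) [(zpowers z).FiniteIndex] :
    ∃ ψ : G →* Multiplicative ℤ, Function.Surjective ψ ∧ Finite ψ.ker ∧
      ∃ k : ℤ, k ≠ 0 ∧ ∀ g, g ^ (zpowers z).index = z ^ (k * (ψ g).toAdd) := by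
  obtain ⟨V, hV⟩ := exists_hom_pow_index_eq_zpow_of_mem_center hcen hz
  have hn : 0 < (zpowers z).index := Nat.pos_of_ne_zero FiniteIndex.index_ne_zero
  have hV1 : V ≠ 1 := fun h => hz <| isOfFinOrder_iff_pow_eq_one.mpr
    ⟨_, hn, by rw [hV, h, MonoidHom.one_apply, toAdd_one, zpow_zero]⟩
  obtain ⟨ψ, hψ, k, hk, hVψ⟩ := V.exists_surjective_int_mul_eq hV1
  have hpow (g : G) : g ^ (zpowers z).index = z ^ (k * (ψ g).toAdd) := by rw [hV, hVψ]
  refine ⟨ψ, hψ, finite_of_forall_isOfFinOrder (fun g hg => ?_) hz, k, hk, hpow⟩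
  exact isOfFinOrder_iff_pow_eq_one.mpr
    ⟨_, hn, by rw [hpow, MonoidHom.mem_ker.mp hg, toAdd_one, mul_zero, zpow_zero]⟩

namespace DihedralGroup

/- `ZMod 0` is `ℤ` only up to unfolding, so `r_mul_r` and its siblings do not rewrite
products whose arguments are `ℤ`-valued. -/

theorem r_mul_r_int (i j : ℤ) : (r i : DihedralGroup 0) * r j = r (i + j) := rfl

theorem r_mul_sr_int (i j : ℤ) : (r i : DihedralGroup 0) * sr j = sr (j - i) := rfl

theorem sr_mul_r_int (i j : ℤ) : (sr i : DihedralGroup 0) * r j = sr (i + j) := rfl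

theorem sr_mul_sr_int (i j : ℤ) : (sr i : DihedralGroup 0) * sr j = r (j - i) := rfl

end DihedralGroup

namespace MonoidHom

variable {P : Subgroup G} (ψ : P →* Multiplicative ℤ)

open Classical in
noncomputable def extendByZero (g : G) : ℤ :=
  if h : g ∈ P then (ψ ⟨g, h⟩).toAdd else 0

theorem extendByZero_of_mem {g : G} (h : g ∈ P) : ψ.extendByZero g = (ψ ⟨g, h⟩).toAdd :=
  dif_pos h

theorem extendByZero_mul {x y : G} (hx : x ∈ P) (hy : y ∈ P) :
    ψ.extendByZero (x * y) = ψ.extendByZero x + ψ.extendByZero y := by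
  rw [extendByZero_of_mem ψ hx, extendByZero_of_mem ψ hy,
    extendByZero_of_mem ψ (P.mul_mem hx hy), ← toAdd_mul, ← map_mul]
  rfl

open Classical in
noncomputable def toDihedral (s g : G) : DihedralGroup 0 :=
  if g ∈ P then r (ψ.extendByZero g) else sr (ψ.extendByZero (s⁻¹ * g))

theorem toDihedral_eq_one {s g : G} (hg : ψ.toDihedral s g = 1) :
    ∃ h : g ∈ P, ψ ⟨g, h⟩ = 1 := by
  rw [one_def, toDihedral] at hg
  split_ifs at hg with h
  injection hg with hg
  exact ⟨h, toAdd.injective (by rwa [extendByZero_of_mem ψ h] at hg)⟩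

variable {ψ} (hP : P.index = 2) {s : G} (hs : s ∉ P)
  (hconj : ∀ g h : P, (h : G) = s * g * s⁻¹ → ψ h = (ψ g)⁻¹)
include hP hconj

theorem extendByZero_conj {x : G} (hx : x ∈ P) :
    ψ.extendByZero (s * x * s⁻¹) = -ψ.extendByZero x := by
  have hsx : s * x * s⁻¹ ∈ P := (normal_of_index_eq_two hP).conj_mem x hx s
  rw [extendByZero_of_mem ψ hx, extendByZero_of_mem ψ hsx, hconj ⟨x, hx⟩ ⟨_, hsx⟩ rfl]
  rfl

theorem extendByZero_conj_inv {x : G} (hx : x ∈ P) :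
    ψ.extendByZero (s⁻¹ * x * s) = -ψ.extendByZero x := by
  have h := extendByZero_conj hP hconj ((normal_of_index_eq_two hP).conj_mem' x hx s)
  rw [show s * (s⁻¹ * x * s) * s⁻¹ = x by group] at h
  omega

theorem extendByZero_mul_self : ψ.extendByZero (s * s) = 0 := by
  have h := extendByZero_conj hP hconj (mul_self_mem_of_index_two hP s)
  rw [show s * (s * s) * s⁻¹ = s * s by group] at h
  omega

include hs in
theorem toDihedral_mul (x y : G) :
    ψ.toDihedral s (x * y) = ψ.toDihedral s x * ψ.toDihedral s y := by
  have hN := normal_of_index_eq_two hP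
  have mem_iff (g : G) : s⁻¹ * g ∈ P ↔ g ∉ P := by
    rw [mul_mem_iff_of_index_two hP, inv_mem_iff]
    tauto
  have hxy := mul_mem_iff_of_index_two hP (a := x) (b := y)
  by_cases hx : x ∈ P <;> by_cases hy : y ∈ P <;>
    simp only [toDihedral, hx, hy, hxy, iff_true, iff_false, not_true_eq_false, if_true, if_false]
  · rw [r_mul_r_int, extendByZero_mul ψ hx hy]
  · rw [r_mul_sr_int, show s⁻¹ * (x * y) = s⁻¹ * x * s * (s⁻¹ * y) by group,
      extendByZero_mul ψ (hN.conj_mem' x hx s) ((mem_iff y).mpr hy),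
      extendByZero_conj_inv hP hconj hx, neg_add_eq_sub]
  · rw [sr_mul_r_int, ← mul_assoc, extendByZero_mul ψ ((mem_iff x).mpr hx) hy]
  · have hx' := (mem_iff x).mpr hx
    have hy' := (mem_iff y).mpr hy
    have hss := mul_self_mem_of_index_two hP s
    rw [sr_mul_sr_int, show x * y = s * (s⁻¹ * x) * s⁻¹ * (s * s * (s⁻¹ * y)) by group,
      extendByZero_mul ψ (hN.conj_mem _ hx' s) (P.mul_mem hss hy'), extendByZero_mul ψ hss hy',
      extendByZero_conj hP hconj hx', extendByZero_mul_self hP hconj, zero_add, neg_add_eq_sub]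

include hs in
theorem exists_surjective_dihedral_of_index_two (hψ : Function.Surjective ψ)
    (hker : Finite ψ.ker) :
    ∃ f : G →* DihedralGroup 0, Function.Surjective f ∧ Finite f.ker := by
  let f : G →* DihedralGroup 0 := MonoidHom.mk' (ψ.toDihedral s) (toDihedral_mul hP hs hconj)
  refine ⟨f, ?_, ?_⟩
  · rintro (i | i) <;> obtain ⟨p, hp⟩ := hψ (ofAdd i)
    · refine ⟨p, ?_⟩
      simp only [f, mk'_apply, toDihedral, p.2, if_true, extendByZero_of_mem ψ p.2, hp]
      rfl
    · have hsp : s * p ∉ P := fun h => hs (by simpa using P.mul_mem h (P.inv_mem p.2))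
      refine ⟨s * p, ?_⟩
      simp only [f, mk'_apply, toDihedral, hsp, if_false, inv_mul_cancel_left,
        extendByZero_of_mem ψ p.2, hp]
      rfl
  · choose hmem hone using fun g : f.ker => toDihedral_eq_one ψ g.2
    exact Finite.of_injective (fun g => (⟨⟨g, hmem g⟩, hone g⟩ : ψ.ker)) fun a b h =>
      Subtype.ext (congrArg (fun x : ψ.ker => (x : G)) h)

end MonoidHom

theorem exists_surjective_dihedral_of_conj_eq_inv {z : G} (hz : ¬IsOfFinOrder z)
    [(zpowers z).Normal] [(zpowers z).FiniteIndex] {s : G} (hs : s * z * s⁻¹ = z⁻¹) :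
    ∃ f : G →* DihedralGroup 0, Function.Surjective f ∧ Finite f.ker := by
  set P := centralizer {z}
  let z' : P := ⟨z, mem_centralizer_singleton_iff.mpr rfl⟩
  have hcen : z' ∈ center P :=
    mem_center_iff.mpr fun g => Subtype.ext (mem_centralizer_singleton_iff.mp g.2)
  have hz' : ¬IsOfFinOrder z' := fun h => hz (P.subtype.isOfFinOrder h)
  have : (zpowers z').FiniteIndex := by
    rw [show zpowers z' = (zpowers z).subgroupOf P by
      ext y; simp [mem_subgroupOf, mem_zpowers_iff, Subtype.ext_iff, z']]
    infer_instance
  obtain ⟨ψ, hψ, hker, k, hk, hpow⟩ := exists_surjective_int_of_mem_center hcen hz'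
  have hsP : s ∉ P := by
    rw [mem_centralizer_singleton_iff_conj, hs]
    exact inv_ne_self_of_not_isOfFinOrder hz
  refine ψ.exists_surjective_dihedral_of_index_two (index_centralizer_eq_two hz hs) hsP
    (fun g h hgh => ?_) hψ hker
  have hzpow (x : P) : (x : G) ^ (zpowers z').index = z ^ (k * (ψ x).toAdd) := by
    simpa using congrArg Subtype.val (hpow x)
  have : z ^ (k * (ψ h).toAdd) = z ^ (k * -(ψ g).toAdd) := by
    rw [← hzpow, hgh, conj_pow, hzpow, ← conj_zpow, hs, inv_zpow', mul_neg]
  have := mul_left_cancel₀ hk (injective_zpow_iff_not_isOfFinOrder.mpr hz this)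
  exact toAdd.injective (by rw [this, toAdd_inv])

end

/-- Every infinite virtually cyclic group surjects onto `ℤ` or onto the infinite
dihedral group `D∞` (here `DihedralGroup 0`) with finite kernel. -/
theorem infinite_virtuallyCyclic_surjects_int_or_dihedral
    (G : Type*) [Group G] [Infinite G] (h : IsVirtuallyCyclic G) :
    (∃ f : G →* Multiplicative ℤ, Function.Surjective f ∧ Finite f.ker) ∨
      (∃ f : G →* DihedralGroup 0, Function.Surjective f ∧ Finite f.ker) := by
  obtain ⟨z, hz, _, _⟩ := h.exists_zpowers_normal_finiteIndex
  by_cases hcen : ∀ g : G, g * z * g⁻¹ = z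
  · obtain ⟨ψ, hψ, hker, -⟩ := exists_surjective_int_of_mem_center
      (mem_center_iff.mpr fun g => mul_inv_eq_iff_eq_mul.mp (hcen g)) hz
    exact .inl ⟨ψ, hψ, hker⟩
  · obtain ⟨s, hs⟩ := not_forall.mp hcen
    exact .inr <| exists_surjective_dihedral_of_conj_eq_inv hz
      ((conj_eq_or_eq_inv_of_zpowers_normal hz s).resolve_left hs)
end

section
/- The group ℤ/2n *_{ℤ/n} ℤ/2n, amalgamated over the index-2 subgroup ℤ/n in each factor, is isomorphic to ℤ/n × D∞ when n is odd. -/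
/-- The natural inclusion `ℤ/n ↪ ℤ/2n`, sending `1` to `2`. -/
def zmodIncl (n : ℕ) : ZMod n →+ ZMod (2 * n) :=
  ZMod.lift n ⟨(zmultiplesHom (ZMod (2 * n))) (2 : ZMod (2 * n)), by
    have h : ((2 * n : ℕ) : ZMod (2 * n)) = 0 := ZMod.natCast_self _
    simp only [zmultiplesHom_apply]
    rw [zsmul_eq_mul]
    push_cast at h ⊢
    linear_combination h⟩

/-- The two inclusions `ℤ/n ↪ ℤ/2n` (written multiplicatively) used to form the
amalgamated product `ℤ/2n *_{ℤ/n} ℤ/2n`. -/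
def amalgMaps (n : ℕ) : ∀ _ : Bool,
    Multiplicative (ZMod n) →* Multiplicative (ZMod (2 * n)) :=
  fun _ => AddMonoidHom.toMultiplicative (zmodIncl n)


/-!
Write `a`, `b` for the generators of the two factors `ℤ/2n`; then `z := a² = b²` generates the
amalgamated `ℤ/n`, which is central because both factors are abelian. As `n` is odd, `2` is
invertible mod `n`, and with `c := 1/2` the elements `a z⁻ᶜ` and `b z⁻ᶜ` are involutions. Two
involutions generate a quotient of `D∞ = ℤ/2 * ℤ/2`, so `(x, d) ↦ zˣ · d` is a homomorphism
`ℤ/n × D∞ → ℤ/2n *_{ℤ/n} ℤ/2n`. Its inverse sends `a ↦ (c, sr 0)` and `b ↦ (c, sr 1)`: these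
elements have order dividing `2n` and equal squares `(1, 1)`, the image of `z`.
-/

open Multiplicative

section ZModLift

variable {G : Type*} [Group G] {k : ℕ}

def zmodLift (k : ℕ) (g : G) (hg : g ^ k = 1) : Multiplicative (ZMod k) →* G :=
  AddMonoidHom.toMultiplicativeLeft <|
    ZMod.lift k ⟨zmultiplesHom (Additive G) (Additive.ofMul g), by
      simpa using congrArg Additive.ofMul hg⟩

@[simp]
theorem zmodLift_ofAdd_intCast (g : G) (hg : g ^ k = 1) (z : ℤ) :
    zmodLift k g hg (ofAdd (z : ZMod k)) = g ^ z := by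
  simp [zmodLift]

@[simp]
theorem zmodLift_ofAdd_one (g : G) (hg : g ^ k = 1) : zmodLift k g hg (ofAdd 1) = g := by
  simpa using zmodLift_ofAdd_intCast g hg 1

theorem MonoidHom.ext_mzmod {f g : Multiplicative (ZMod k) →* G}
    (h : f (ofAdd 1) = g (ofAdd 1)) : f = g := by
  refine MonoidHom.ext fun x => ?_
  obtain ⟨z, hz⟩ := ZMod.intCast_surjective (toAdd x)
  have hx : x = ofAdd 1 ^ z := by rw [← ofAdd_zsmul, zsmul_one, hz, ofAdd_toAdd]
  rw [hx, map_zpow, map_zpow, h]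

end ZModLift

theorem Monoid.PushoutI.commute_base {ι H : Type*} {G : ι → Type*} [∀ i, CommMonoid (G i)]
    [CommMonoid H] (φ : ∀ i, H →* G i) (h : H) (x : PushoutI φ) : Commute (base φ h) x := by
  induction x using induction_on with
  | of i g => rw [← of_apply_eq_base φ i]; exact (Commute.all _ _).map (of i)
  | base h' => exact (Commute.all _ _).map (base φ)
  | mul x y hx hy => exact hx.mul_right hy

theorem mul_zpow_mul_eq_mul_mul_zpow_neg {G : Type*} [Group G] {s t : G} (hs : s * s = 1)
    (ht : t * t = 1) (z : ℤ) : (s * t) ^ z * s = s * (s * t) ^ (-z) := by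
  have h : SemiconjBy s (s * t)⁻¹ (s * t) := by
    rw [SemiconjBy, mul_inv_rev, inv_eq_of_mul_eq_one_right ht, inv_eq_of_mul_eq_one_right hs,
      mul_assoc]
  rw [zpow_neg, ← inv_zpow]
  exact (h.zpow_right z).symm

namespace DihedralGroup

variable {G : Type*} [Group G]

theorem hom_ext {n : ℕ} {f g : DihedralGroup n →* G} (h₀ : f (sr 0) = g (sr 0))
    (h₁ : f (sr 1) = g (sr 1)) : f = g := by
  have hr (i : ZMod n) : f (r i) = g (r i) := by
    obtain ⟨z, rfl⟩ := ZMod.intCast_surjective i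
    rw [← r_one_zpow, ← sub_zero (1 : ZMod n), ← sr_mul_sr, map_zpow, map_zpow, map_mul, map_mul,
      h₀, h₁]
  ext (i | i)
  · exact hr i
  · rw [← zero_add i, ← sr_mul_r, map_mul, map_mul, h₀, hr]

def liftOfInvolutions (s t : G) (hs : s * s = 1) (ht : t * t = 1) : DihedralGroup 0 →* G where
  -- `ZMod 0` is `ℤ` by definition.
  toFun
    | r (i : ℤ) => (s * t) ^ i
    | sr (i : ℤ) => s * (s * t) ^ i
  map_one' := zpow_zero _
  map_mul' := by
    have key := mul_zpow_mul_eq_mul_mul_zpow_neg hs ht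
    have h_rsr (i j : ℤ) : s * (s * t) ^ (j - i) = (s * t) ^ i * (s * (s * t) ^ j) := by
      rw [← mul_assoc, key, mul_assoc, ← zpow_add, neg_add_eq_sub]
    have h_srr (i j : ℤ) : s * (s * t) ^ (i + j) = s * (s * t) ^ i * (s * t) ^ j := by
      rw [mul_assoc, ← zpow_add]
    have h_srsr (i j : ℤ) : (s * t) ^ (j - i) = s * (s * t) ^ i * (s * (s * t) ^ j) := by
      rw [mul_assoc, ← mul_assoc _ s, key, ← mul_assoc, ← mul_assoc, hs, one_mul, ← zpow_add,
        neg_add_eq_sub]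
    rintro (i | i) (j | j)
    · exact zpow_add _ i j
    · exact h_rsr i j
    · exact h_srr i j
    · exact h_srsr i j

@[simp]
theorem liftOfInvolutions_sr_zero (s t : G) (hs : s * s = 1) (ht : t * t = 1) :
    liftOfInvolutions s t hs ht (sr 0) = s := by
  change s * (s * t) ^ (0 : ℤ) = s
  rw [zpow_zero, mul_one]

@[simp]
theorem liftOfInvolutions_sr_one (s t : G) (hs : s * s = 1) (ht : t * t = 1) :
    liftOfInvolutions s t hs ht (sr 1) = t := by
  change s * (s * t) ^ (1 : ℤ) = t
  rw [zpow_one, ← mul_assoc, hs, one_mul]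

end DihedralGroup

theorem ZMod.two_mul_inv_two {n : ℕ} (hn : Odd n) : 2 * (2 : ZMod n)⁻¹ = 1 := by
  exact_mod_cast ZMod.coe_mul_inv_eq_one 2 (Nat.coprime_two_left.mpr hn)

theorem zmodIncl_one (n : ℕ) : zmodIncl n 1 = 2 := by
  rw [← Int.cast_one, zmodIncl, ZMod.lift_coe]
  simp

theorem amalgMaps_ofAdd_one (n : ℕ) (i : Bool) : amalgMaps n i (ofAdd 1) = ofAdd 1 ^ 2 := by
  simp [amalgMaps, zmodIncl_one, ← ofAdd_nsmul]

section Amalgam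

open Monoid.PushoutI DihedralGroup

variable {n : ℕ}

theorem of_ofAdd_one_sq (i : Bool) :
    of (φ := amalgMaps n) i (ofAdd 1) ^ 2 = base (amalgMaps n) (ofAdd 1) := by
  rw [← map_pow, ← amalgMaps_ofAdd_one n i, of_apply_eq_base]

variable (n) in
def amalgGenImage (i : Bool) : Multiplicative (ZMod n) × DihedralGroup 0 :=
  (ofAdd (2 : ZMod n)⁻¹, sr (cond i 0 1))

theorem amalgGenImage_sq (hn : Odd n) (i : Bool) :
    amalgGenImage n i ^ 2 = MonoidHom.inl _ _ (ofAdd 1) := by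
  refine Prod.ext ?_ ?_
  · simp [amalgGenImage, ← ofAdd_nsmul, ZMod.two_mul_inv_two hn]
  · simp [amalgGenImage, sq]

theorem amalgGenImage_pow (hn : Odd n) (i : Bool) : amalgGenImage n i ^ (2 * n) = 1 := by
  rw [pow_mul, amalgGenImage_sq hn, ← map_pow, ← ofAdd_nsmul, nsmul_one, ZMod.natCast_self,
    ofAdd_zero, map_one]

def amalgToProd (hn : Odd n) :
    Monoid.PushoutI (amalgMaps n) →* Multiplicative (ZMod n) × DihedralGroup 0 :=
  lift (fun i => zmodLift (2 * n) (amalgGenImage n i) (amalgGenImage_pow hn i))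
    (MonoidHom.inl _ _) fun i => MonoidHom.ext_mzmod <| by
      rw [MonoidHom.comp_apply, amalgMaps_ofAdd_one, map_pow, zmodLift_ofAdd_one,
        amalgGenImage_sq hn]

@[simp]
theorem amalgToProd_of_ofAdd_one (hn : Odd n) (i : Bool) :
    amalgToProd hn (of i (ofAdd 1)) = amalgGenImage n i := by
  simp [amalgToProd]

@[simp]
theorem amalgToProd_base (hn : Odd n) (x : Multiplicative (ZMod n)) :
    amalgToProd hn (base (amalgMaps n) x) = (x, 1) := by
  simp [amalgToProd]

variable (n) in
def amalgReflection (i : Bool) : Monoid.PushoutI (amalgMaps n) :=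
  of i (ofAdd 1) * base (amalgMaps n) (ofAdd (-(2 : ZMod n)⁻¹))

theorem amalgReflection_mul_self (hn : Odd n) (i : Bool) :
    amalgReflection n i * amalgReflection n i = 1 := by
  rw [amalgReflection, (commute_base _ _ _).mul_mul_mul_comm,
    ← sq (of (φ := amalgMaps n) i (ofAdd 1)), of_ofAdd_one_sq, ← map_mul, ← map_mul, ← ofAdd_add,
    ← ofAdd_add]
  have h : (1 : ZMod n) + (-(2 : ZMod n)⁻¹ + -(2 : ZMod n)⁻¹) = 0 := by
    linear_combination -ZMod.two_mul_inv_two hn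
  rw [h, ofAdd_zero, map_one]

theorem base_mul_amalgReflection (i : Bool) :
    base (amalgMaps n) (ofAdd (2 : ZMod n)⁻¹) * amalgReflection n i = of i (ofAdd 1) := by
  rw [amalgReflection, ← mul_assoc, (commute_base _ _ _).eq, mul_assoc, ← map_mul, ← ofAdd_add,
    add_neg_cancel]
  simp

@[simp]
theorem amalgToProd_amalgReflection (hn : Odd n) (i : Bool) :
    amalgToProd hn (amalgReflection n i) = (1, sr (cond i 0 1)) := by
  simp [amalgReflection, amalgGenImage]

def dihedralToAmalg (hn : Odd n) : DihedralGroup 0 →* Monoid.PushoutI (amalgMaps n) :=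
  liftOfInvolutions (amalgReflection n true) (amalgReflection n false)
    (amalgReflection_mul_self hn true) (amalgReflection_mul_self hn false)

def prodToAmalg (hn : Odd n) :
    Multiplicative (ZMod n) × DihedralGroup 0 →* Monoid.PushoutI (amalgMaps n) :=
  (base (amalgMaps n)).noncommCoprod (dihedralToAmalg hn) fun _ _ => commute_base _ _ _

theorem prodToAmalg_amalgGenImage (hn : Odd n) (i : Bool) :
    prodToAmalg hn (amalgGenImage n i) = of i (ofAdd 1) := by
  cases i <;> simp [prodToAmalg, dihedralToAmalg, amalgGenImage, base_mul_amalgReflection]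

theorem prodToAmalg_comp_amalgToProd (hn : Odd n) :
    (prodToAmalg hn).comp (amalgToProd hn) = MonoidHom.id _ :=
  hom_ext_nonempty fun i => MonoidHom.ext_mzmod <| by
    simp [prodToAmalg_amalgGenImage]

theorem amalgToProd_comp_dihedralToAmalg (hn : Odd n) :
    (amalgToProd hn).comp (dihedralToAmalg hn) = MonoidHom.inr _ _ :=
  DihedralGroup.hom_ext (by simp [dihedralToAmalg]) (by simp [dihedralToAmalg])

theorem amalgToProd_comp_prodToAmalg (hn : Odd n) :
    (amalgToProd hn).comp (prodToAmalg hn) = MonoidHom.id _ := by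
  refine MonoidHom.ext fun ⟨x, d⟩ => ?_
  have hd := DFunLike.congr_fun (amalgToProd_comp_dihedralToAmalg hn) d
  simp only [MonoidHom.comp_apply, MonoidHom.inr_apply] at hd
  simp [prodToAmalg, hd]

def amalgMulEquivProd (hn : Odd n) :
    Monoid.PushoutI (amalgMaps n) ≃* Multiplicative (ZMod n) × DihedralGroup 0 :=
  MonoidHom.toMulEquiv _ _ (prodToAmalg_comp_amalgToProd hn) (amalgToProd_comp_prodToAmalg hn)

end Amalgam

theorem amalgam_iso_zmod_times_dihedral_general (n : ℕ) (hodd : Odd n) :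
    Nonempty (Monoid.PushoutI (amalgMaps n) ≃*
      Multiplicative (ZMod n) × DihedralGroup 0) :=
  ⟨amalgMulEquivProd hodd⟩

/-- For `n` odd, the amalgamated product `ℤ/2n *_{ℤ/n} ℤ/2n` (amalgamated over the
index-2 subgroup `ℤ/n` of each factor) is isomorphic to `ℤ/n × D∞`, where
`D∞ = DihedralGroup 0` is the infinite dihedral group. -/
theorem amalgam_iso_zmod_times_dihedral (n : ℕ) (hpos : 0 < n) (hodd : Odd n) :
    Nonempty (Monoid.PushoutI (amalgMaps n) ≃*
      Multiplicative (ZMod n) × DihedralGroup 0) :=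
  amalgam_iso_zmod_times_dihedral_general n hodd
end
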